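/- For u, v, w in the Sobolev space H²(𝕋) of the one-dimensional torus, the bound |⟨∂ₓ²u, vw − e^{τ∂ₓ³}[(e^{−τ∂ₓ³}v)(e^{−τ∂ₓ³}w)]⟩_{L²}| ≤ c·τ·‖∂ₓ²u‖_{L²}·‖∂ₓ²v‖_{L²}·‖∂ₓ²w‖_{L²} holds for all τ > 0, with a constant c independent of τ, u, v, w. -/

import Mathlib

/-- The Airy group `e^{t∂ₓ³}` acting on Fourier coefficients by `f̂ₖ ↦ e^{-itk³} f̂ₖ`. -/
noncomputable def airy (t : ℝ) (f : ℤ → ℂ) : ℤ → ℂ :=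
  fun k => Complex.exp (-Complex.I * (t : ℂ) * (k : ℂ) ^ 3) * f k

/-- Fourier coefficients of the pointwise product: convolution of coefficients. -/
noncomputable def fconv (f g : ℤ → ℂ) : ℤ → ℂ := fun k => ∑' j : ℤ, f j * g (k - j)

/-- The derivative `∂ₓ` as the Fourier multiplier `ik`. -/
def dx (f : ℤ → ℂ) : ℤ → ℂ := fun k => Complex.I * (k : ℂ) * f k

/-- The real `L²(𝕋)` pairing `⟨f,g⟩ = ∫ fg`, in terms of Fourier coefficients. -/
noncomputable def pairing (f g : ℤ → ℂ) : ℂ := ∑' k : ℤ, f k * g (-k)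

/-- The `L²(𝕋)` norm in terms of Fourier coefficients. -/
noncomputable def l2norm (f : ℤ → ℂ) : ℝ := Real.sqrt (∑' k : ℤ, ‖f k‖ ^ 2)

/-- Membership in the Sobolev space `Hʳ(𝕋)`, in terms of Fourier coefficients. -/
def memH (r : ℝ) (f : ℤ → ℂ) : Prop :=
  Summable (fun k : ℤ => (1 + (k : ℝ) ^ 2) ^ r * ‖f k‖ ^ 2)

/-!
Writing `g = vw − e^{τ∂ₓ³}[(e^{−τ∂ₓ³}v)(e^{−τ∂ₓ³}w)]`, the resonance identity
`m³ − j³ − (m − j)³ = 3 j (m − j) m` gives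
`ĝ(m) = ∑ⱼ v̂(j) ŵ(m − j) (1 − e^{−3iτ j (m − j) m})`, and `|1 − e^{iθ}| ≤ |θ|` together with
`|j (m − j) m| ≤ |j| (m − j)² + j² |m − j|` bounds `|ĝ(m)|` by `3τ` times two convolutions, each
of an `ℓ¹` sequence (`∂ₓv` or `∂ₓw`) with an `ℓ²` one (`∂ₓ²w` or `∂ₓ²v`). Young's inequality
bounds the pairing with `∂ₓ²u`, and Cauchy–Schwarz against `k ↦ 1/k` gives
`‖∂ₓf‖_{ℓ¹} ≤ ‖1/k‖_{ℓ²} ‖∂ₓ²f‖_{ℓ²}`. All sums of nonnegative terms are taken in `ℝ≥0∞`, where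
they can be exchanged freely.
-/

open scoped ENNReal
open Complex

noncomputable def l2enorm {ι : Type*} (f : ι → ℝ≥0∞) : ℝ≥0∞ := (∑' i, f i ^ 2) ^ (1 / 2 : ℝ)

theorem tsum_mul_le_l2enorm_mul {ι : Type*} (f g : ι → ℝ≥0∞) :
    ∑' i, f i * g i ≤ l2enorm f * l2enorm g := by
  rw [ENNReal.tsum_eq_iSup_sum]
  refine iSup_le fun s => ?_
  have hs := ENNReal.inner_le_Lp_mul_Lq s f g Real.HolderConjugate.two_two
  simp only [ENNReal.rpow_two] at hs
  refine hs.trans ?_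
  unfold l2enorm
  gcongr <;> exact ENNReal.sum_le_tsum s

theorem l2enorm_comp_equiv {ι : Type*} (f : ι → ℝ≥0∞) (e : ι ≃ ι) :
    l2enorm (f ∘ e) = l2enorm f := by
  unfold l2enorm
  rw [Function.comp_def, e.tsum_eq (fun i => f i ^ 2)]

/-- Young's inequality for the trilinear form `∑_{k + j + l = 0} a_k b_j d_l`. -/
theorem tsum_mul_tsum_mul_neg_sub_le {G : Type*} [AddGroup G] (a b d : G → ℝ≥0∞) :
    ∑' k, a k * ∑' j, b j * d (-k - j) ≤ (∑' j, b j) * (l2enorm a * l2enorm d) := by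
  calc ∑' k, a k * ∑' j, b j * d (-k - j) = ∑' j, b j * ∑' k, a k * d (-k - j) := by
        simp_rw [← ENNReal.tsum_mul_left]
        rw [ENNReal.tsum_comm]
        simp_rw [mul_left_comm]
    _ ≤ ∑' j, b j * (l2enorm a * l2enorm d) := by
        gcongr with j
        refine (tsum_mul_le_l2enorm_mul a _).trans_eq ?_
        rw [← l2enorm_comp_equiv d ((Equiv.neg G).trans (Equiv.subRight j))]
        rfl
    _ = (∑' j, b j) * (l2enorm a * l2enorm d) := ENNReal.tsum_mul_right

theorem l2enorm_enorm_ne_top {ι E : Type*} [SeminormedAddCommGroup E] {f : ι → E}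
    (hf : Summable fun i => ‖f i‖ ^ 2) : l2enorm (fun i => ‖f i‖ₑ) ≠ ⊤ := by
  have hsum : Summable fun i => ‖‖f i‖ ^ 2‖ := by simpa using hf
  rw [l2enorm]
  refine ENNReal.rpow_ne_top_of_nonneg (by norm_num) ?_
  simpa [enorm_pow] using tsum_enorm_ne_top_iff_summable_norm.2 hsum

theorem l2enorm_inv_intCast_ne_top : l2enorm (fun k : ℤ => ‖(k : ℂ)⁻¹‖ₑ) ≠ ⊤ :=
  l2enorm_enorm_ne_top (by simpa using Real.summable_one_div_int_pow.2 one_lt_two)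

theorem one_le_l2enorm_inv_intCast : 1 ≤ l2enorm (fun k : ℤ => ‖(k : ℂ)⁻¹‖ₑ) := by
  rw [l2enorm]
  refine ENNReal.one_le_rpow ?_ (by norm_num)
  exact le_of_eq_of_le (by simp) (ENNReal.le_tsum (f := fun k : ℤ => ‖(k : ℂ)⁻¹‖ₑ ^ 2) 1)

theorem l2norm_eq_toReal_l2enorm (f : ℤ → ℂ) : l2norm f = (l2enorm fun k => ‖f k‖ₑ).toReal := by
  rw [l2enorm, ← ENNReal.toReal_rpow, ENNReal.tsum_toReal_eq fun k => by finiteness,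
    ← Real.sqrt_eq_rpow]
  simp [l2norm]

theorem summable_norm_mul_sub {G : Type*} [AddGroup G] {v w : G → ℂ}
    (hv : l2enorm (fun k => ‖v k‖ₑ) ≠ ⊤) (hw : l2enorm (fun k => ‖w k‖ₑ) ≠ ⊤) (m : G) :
    Summable fun j => ‖v j * w (m - j)‖ := by
  have hle : ∑' j, ‖v j * w (m - j)‖ₑ ≤ l2enorm (fun k => ‖v k‖ₑ) * l2enorm (fun k => ‖w k‖ₑ) := by
    simp_rw [enorm_mul]
    refine (tsum_mul_le_l2enorm_mul _ _).trans_eq ?_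
    rw [← l2enorm_comp_equiv (fun k => ‖w k‖ₑ) (Equiv.subLeft m)]
    rfl
  exact tsum_enorm_ne_top_iff_summable_norm.1 (ne_top_of_le_ne_top (ENNReal.mul_ne_top hv hw) hle)

theorem norm_dx (f : ℤ → ℂ) (k : ℤ) : ‖dx f k‖ = |(k : ℝ)| * ‖f k‖ := by
  simp [dx]

theorem norm_dx_dx (f : ℤ → ℂ) (k : ℤ) : ‖dx (dx f) k‖ = (k : ℝ) ^ 2 * ‖f k‖ := by
  rw [norm_dx, norm_dx, ← mul_assoc, ← sq, sq_abs]

-- At `k = 0` both sides vanish, since `(0 : ℂ)⁻¹ = 0`.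
theorem dx_eq_inv_mul_dx_dx (f : ℤ → ℂ) (k : ℤ) : dx f k = (I * k)⁻¹ * dx (dx f) k := by
  rcases eq_or_ne (k : ℂ) 0 with hk | hk
  · simp [dx, hk]
  · simp only [dx]
    field_simp

theorem tsum_enorm_dx_le (f : ℤ → ℂ) :
    ∑' k, ‖dx f k‖ₑ ≤ l2enorm (fun k : ℤ => ‖(k : ℂ)⁻¹‖ₑ) * l2enorm (fun k => ‖dx (dx f) k‖ₑ) := by
  refine le_of_eq_of_le (tsum_congr fun k => ?_) (tsum_mul_le_l2enorm_mul _ _)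
  simp [dx_eq_inv_mul_dx_dx f k, enorm_eq_nnnorm]

theorem memH.mono {r s : ℝ} {f : ℤ → ℂ} (hf : memH r f) (hsr : s ≤ r) : memH s f := by
  refine hf.of_nonneg_of_le (fun k => by positivity) fun k => ?_
  gcongr
  exact le_add_of_nonneg_right (sq_nonneg _)

theorem memH.dx {r : ℝ} {f : ℤ → ℂ} (hf : memH r f) : memH (r - 1) (dx f) := by
  refine hf.of_nonneg_of_le (fun k => by positivity) fun k => ?_
  have h1 : (0 : ℝ) < 1 + (k : ℝ) ^ 2 := by positivity
  rw [norm_dx, mul_pow, sq_abs, ← mul_assoc, Real.rpow_sub_one h1.ne']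
  gcongr
  rw [div_mul_eq_mul_div, div_le_iff₀ h1]
  nlinarith [Real.rpow_nonneg h1.le r]

theorem memH.l2enorm_ne_top {f : ℤ → ℂ} (hf : memH 0 f) : l2enorm (fun k => ‖f k‖ₑ) ≠ ⊤ :=
  l2enorm_enorm_ne_top (by simpa [memH] using hf)

theorem abs_mul_mul_add_le {α : Type*} [CommRing α] [LinearOrder α] [IsStrictOrderedRing α]
    (x y : α) : |x * y * (x + y)| ≤ |x| * y ^ 2 + x ^ 2 * |y| := by
  calc |x * y * (x + y)| = |x| * |y| * |x + y| := by rw [abs_mul, abs_mul]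
    _ ≤ |x| * |y| * (|x| + |y|) := by gcongr; exact abs_add_le x y
    _ = |x| * y ^ 2 + x ^ 2 * |y| := by rw [← sq_abs x, ← sq_abs y]; ring

-- The phase is `t (m³ − j³ − (m − j)³) = 3 t j (m − j) m`.
theorem airy_fconv_airy_neg (t : ℝ) (v w : ℤ → ℂ) (m : ℤ) :
    airy t (fconv (airy (-t) v) (airy (-t) w)) m =
      ∑' j : ℤ, exp (I * ((-3 * t * j * (m - j) * m : ℝ) : ℂ)) * (v j * w (m - j)) := by
  simp only [airy, fconv, ← tsum_mul_left]
  refine tsum_congr fun j => ?_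
  have hphase : -I * t * m ^ 3 + -I * ↑(-t) * j ^ 3 + -I * ↑(-t) * ((m - j : ℤ) : ℂ) ^ 3 =
      I * ((-3 * t * j * (m - j) * m : ℝ) : ℂ) := by
    push_cast; ring
  rw [← hphase, exp_add, exp_add]
  ring

theorem fconv_sub_airy_fconv_airy_neg (t : ℝ) {v w : ℤ → ℂ} {m : ℤ}
    (h : Summable fun j => ‖v j * w (m - j)‖) :
    fconv v w m - airy t (fconv (airy (-t) v) (airy (-t) w)) m =
      ∑' j : ℤ, v j * w (m - j) * (1 - exp (I * ((-3 * t * j * (m - j) * m : ℝ) : ℂ))) := by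
  have htwisted : Summable fun j : ℤ =>
      exp (I * ((-3 * t * j * (m - j) * m : ℝ) : ℂ)) * (v j * w (m - j)) :=
    Summable.of_norm_bounded h fun j => by rw [norm_mul, norm_exp_I_mul_ofReal, one_mul]
  rw [airy_fconv_airy_neg, fconv, ← h.of_norm.tsum_sub htwisted]
  exact tsum_congr fun j => by ring

theorem norm_mul_one_sub_exp_le {t : ℝ} (ht : 0 ≤ t) (v w : ℤ → ℂ) (m j : ℤ) :
    ‖v j * w (m - j) * (1 - exp (I * ((-3 * t * j * (m - j) * m : ℝ) : ℂ)))‖ ≤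
      3 * t * (‖dx v j‖ * ‖dx (dx w) (m - j)‖ + ‖dx (dx v) j‖ * ‖dx w (m - j)‖) := by
  have hphase : ‖1 - exp (I * ((-3 * t * j * (m - j) * m : ℝ) : ℂ))‖ ≤
      3 * t * |(j : ℝ) * ((m - j : ℤ) : ℝ) * (j + ((m - j : ℤ) : ℝ))| := by
    refine (norm_sub_rev _ _).trans_le (Real.norm_exp_I_mul_ofReal_sub_one_le.trans_eq ?_)
    push_cast
    rw [Real.norm_eq_abs, show -3 * t * j * (m - j) * m = -(3 * t) * (j * (m - j) * (j + (m - j)))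
      by ring, abs_mul, abs_neg, abs_of_nonneg (by positivity)]
  rw [norm_mul, norm_mul, norm_dx_dx, norm_dx_dx, norm_dx, norm_dx]
  calc _ ≤ ‖v j‖ * ‖w (m - j)‖ * (3 * t * (|(j : ℝ)| * ((m - j : ℤ) : ℝ) ^ 2 +
          (j : ℝ) ^ 2 * |((m - j : ℤ) : ℝ)|)) := by
        gcongr
        exact hphase.trans (by gcongr; exact abs_mul_mul_add_le _ _)
    _ = _ := by ring

theorem enorm_fconv_sub_airy_fconv_airy_neg_le {t : ℝ} (ht : 0 ≤ t) {v w : ℤ → ℂ} {m : ℤ}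
    (h : Summable fun j => ‖v j * w (m - j)‖) :
    ‖fconv v w m - airy t (fconv (airy (-t) v) (airy (-t) w)) m‖ₑ ≤
      ENNReal.ofReal (3 * t) * (∑' j, ‖dx v j‖ₑ * ‖dx (dx w) (m - j)‖ₑ +
        ∑' j, ‖dx w j‖ₑ * ‖dx (dx v) (m - j)‖ₑ) := by
  have hterm (j : ℤ) :
      ‖v j * w (m - j) * (1 - exp (I * ((-3 * t * j * (m - j) * m : ℝ) : ℂ)))‖ₑ ≤
        ENNReal.ofReal (3 * t) * (‖dx v j‖ₑ * ‖dx (dx w) (m - j)‖ₑ +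
          ‖dx (dx v) j‖ₑ * ‖dx w (m - j)‖ₑ) := by
    simp only [← ofReal_norm]
    rw [← ENNReal.ofReal_mul (norm_nonneg _), ← ENNReal.ofReal_mul (norm_nonneg _),
      ← ENNReal.ofReal_add (by positivity) (by positivity), ← ENNReal.ofReal_mul (by positivity)]
    exact ENNReal.ofReal_le_ofReal (norm_mul_one_sub_exp_le ht v w m j)
  have hswap : ∑' j, ‖dx (dx v) j‖ₑ * ‖dx w (m - j)‖ₑ =
      ∑' j, ‖dx w j‖ₑ * ‖dx (dx v) (m - j)‖ₑ := by
    rw [← (Equiv.subLeft m).tsum_eq]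
    simp only [Equiv.subLeft_apply, sub_sub_cancel, mul_comm]
  rw [fconv_sub_airy_fconv_airy_neg t h, ← hswap, ← ENNReal.tsum_add, ← ENNReal.tsum_mul_left]
  exact enorm_tsum_le_tsum_enorm.trans (ENNReal.tsum_le_tsum hterm)

theorem enorm_pairing_dx_dx_commutator_le {t : ℝ} (ht : 0 ≤ t) (u : ℤ → ℂ) {v w : ℤ → ℂ}
    (hv : l2enorm (fun k => ‖v k‖ₑ) ≠ ⊤) (hw : l2enorm (fun k => ‖w k‖ₑ) ≠ ⊤) :
    ‖pairing (dx (dx u))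
        (fun k => fconv v w k - airy t (fconv (airy (-t) v) (airy (-t) w)) k)‖ₑ ≤
      ENNReal.ofReal (3 * t) * (2 * l2enorm (fun k : ℤ => ‖(k : ℂ)⁻¹‖ₑ)) *
        l2enorm (fun k => ‖dx (dx u) k‖ₑ) * l2enorm (fun k => ‖dx (dx v) k‖ₑ) *
          l2enorm (fun k => ‖dx (dx w) k‖ₑ) := by
  set H := l2enorm (fun k : ℤ => ‖(k : ℂ)⁻¹‖ₑ)
  set A := l2enorm (fun k => ‖dx (dx u) k‖ₑ)
  set B := l2enorm (fun k => ‖dx (dx v) k‖ₑ)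
  set C := l2enorm (fun k => ‖dx (dx w) k‖ₑ)
  calc _ ≤ ∑' k, ‖dx (dx u) k‖ₑ *
          ‖fconv v w (-k) - airy t (fconv (airy (-t) v) (airy (-t) w)) (-k)‖ₑ :=
        enorm_tsum_le_tsum_enorm.trans_eq (tsum_congr fun k => enorm_mul _ _)
    _ ≤ ∑' k, ‖dx (dx u) k‖ₑ * (ENNReal.ofReal (3 * t) *
          (∑' j, ‖dx v j‖ₑ * ‖dx (dx w) (-k - j)‖ₑ +
            ∑' j, ‖dx w j‖ₑ * ‖dx (dx v) (-k - j)‖ₑ)) := by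
        gcongr with k
        exact enorm_fconv_sub_airy_fconv_airy_neg_le ht (summable_norm_mul_sub hv hw _)
    _ = ENNReal.ofReal (3 * t) *
          (∑' k, ‖dx (dx u) k‖ₑ * ∑' j, ‖dx v j‖ₑ * ‖dx (dx w) (-k - j)‖ₑ +
            ∑' k, ‖dx (dx u) k‖ₑ * ∑' j, ‖dx w j‖ₑ * ‖dx (dx v) (-k - j)‖ₑ) := by
        rw [← ENNReal.tsum_add, ← ENNReal.tsum_mul_left]
        simp_rw [mul_add, mul_left_comm]
    _ ≤ ENNReal.ofReal (3 * t) *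
          ((∑' j, ‖dx v j‖ₑ) * (A * C) + (∑' j, ‖dx w j‖ₑ) * (A * B)) := by
        gcongr <;> exact tsum_mul_tsum_mul_neg_sub_le _ _ _
    _ ≤ ENNReal.ofReal (3 * t) * (H * B * (A * C) + H * C * (A * B)) := by
        gcongr <;> exact tsum_enorm_dx_le _
    _ = ENNReal.ofReal (3 * t) * (2 * H) * A * B * C := by ring

/-- Commutator bound for the Airy group against a product, at the `H²` level:
`|⟨∂ₓ²u, vw − e^{τ∂ₓ³}[(e^{−τ∂ₓ³}v)(e^{−τ∂ₓ³}w)]⟩| ≤ c τ ‖∂ₓ²u‖ ‖∂ₓ²v‖ ‖∂ₓ²w‖`. -/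
theorem airy_product_commutator_H2 :
    ∃ c : ℝ, 0 < c ∧ ∀ (τ : ℝ), 0 < τ → ∀ u v w : ℤ → ℂ,
      memH 2 u → memH 2 v → memH 2 w →
      ‖pairing (dx (dx u))
          (fun k => fconv v w k - airy τ (fconv (airy (-τ) v) (airy (-τ) w)) k)‖ ≤
        c * τ * l2norm (dx (dx u)) * l2norm (dx (dx v)) * l2norm (dx (dx w)) := by
  have hH : 0 < (l2enorm fun k : ℤ => ‖(k : ℂ)⁻¹‖ₑ).toReal :=
    ENNReal.toReal_pos (one_pos.trans_le one_le_l2enorm_inv_intCast).ne' l2enorm_inv_intCast_ne_top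
  refine ⟨6 * (l2enorm fun k : ℤ => ‖(k : ℂ)⁻¹‖ₑ).toReal, by positivity, ?_⟩
  intro τ hτ u v w hu hv hw
  have hl2 {f : ℤ → ℂ} (hf : memH 2 f) : l2enorm (fun k => ‖f k‖ₑ) ≠ ⊤ :=
    (hf.mono zero_le_two).l2enorm_ne_top
  have hl2_dx_dx {f : ℤ → ℂ} (hf : memH 2 f) : l2enorm (fun k => ‖dx (dx f) k‖ₑ) ≠ ⊤ := by
    refine memH.l2enorm_ne_top ?_
    convert hf.dx.dx using 1
    norm_num
  have key := enorm_pairing_dx_dx_commutator_le hτ.le u (hl2 hv) (hl2 hw)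
  rw [← toReal_enorm, l2norm_eq_toReal_l2enorm, l2norm_eq_toReal_l2enorm,
    l2norm_eq_toReal_l2enorm]
  refine (ENNReal.toReal_mono ?_ key).trans_eq ?_
  · finiteness [l2enorm_inv_intCast_ne_top, hl2_dx_dx hu, hl2_dx_dx hv, hl2_dx_dx hw]
  simp only [ENNReal.toReal_mul, ENNReal.toReal_ofNat,
    ENNReal.toReal_ofReal (by positivity : 0 ≤ 3 * τ)]
  ring
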